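/- arXiv:2511.20594 — 3 statements merged into one kernel-verified Lean document; each statement's English description precedes it below -/
import Mathlib

section
/- Let d ≥ 1, let c ∈ (0, ∞), let C ≥ 0, and let D be a real d×d matrix. For each n, let a_{n,1}, …, a_{n,n} ∈ ℝ^d satisfy: (i) ∑_{j=1}^n a_{n,j} = 0; (ii) (1/n) ∑_{j=1}^n a_{n,j} a_{n,j}ᵀ → D entrywise as n → ∞; (iii) (1/n) ∑_{j=1}^n ‖a_{n,j}‖³ ≤ C for all n. Let (M_n) be natural numbers with M_n / n → c. Then for every t ∈ ℝ^d, [ (1/n) ∑_{j=1}^n exp( i (√n / M_n) tᵀ a_{n,j} ) ]^{M_n} → exp( −tᵀ D t / (2c) ) as n → ∞. -/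
open Filter
open scoped RealInnerProductSpace

open Complex intervalIntegral

lemma hder0 (u : ℝ) : HasDerivAt (fun v : ℝ => Complex.exp (Complex.I * v))
    (Complex.I * Complex.exp (Complex.I * u)) u := by
  have h1 : HasDerivAt (fun v : ℝ => (Complex.I * v : ℂ)) Complex.I u := by
    simpa using (Complex.ofRealCLM.hasDerivAt (x := u)).const_mul Complex.I
  simpa [mul_comm] using h1.cexp

lemma aux0 {x : ℝ} (hx : 0 ≤ x) : ‖Complex.exp (Complex.I * x) - 1‖ ≤ x := by
  have hint : ∫ u in (0:ℝ)..x, Complex.I * Complex.exp (Complex.I * u)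
      = (Complex.exp (Complex.I * x) - 1) - (Complex.exp (Complex.I * 0) - 1) := by
    apply intervalIntegral.integral_eq_sub_of_hasDerivAt
    · intro u _; exact (hder0 u).sub_const 1
    · exact (Continuous.intervalIntegrable (by continuity) _ _)
  have hb : ‖∫ u in (0:ℝ)..x, Complex.I * Complex.exp (Complex.I * u)‖ ≤ |∫ _u in (0:ℝ)..x, (1:ℝ)| := by
    apply intervalIntegral.norm_integral_le_abs_of_norm_le
    · filter_upwards with t
      simp [Complex.norm_exp]
    · exact (Continuous.intervalIntegrable (by continuity) _ _)
  rw [hint] at hb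
  rw [intervalIntegral.integral_const] at hb
  simpa [_root_.abs_of_nonneg hx] using hb

lemma aux1 {x : ℝ} (hx : 0 ≤ x) :
    ‖Complex.exp (Complex.I * x) - 1 - Complex.I * x‖ ≤ x ^ 2 / 2 := by
  have hder : ∀ u : ℝ, HasDerivAt (fun v : ℝ => Complex.exp (Complex.I * v) - 1 - Complex.I * v)
      (Complex.I * (Complex.exp (Complex.I * u) - 1)) u := by
    intro u
    have h1 : HasDerivAt (fun v : ℝ => (Complex.I * v : ℂ)) Complex.I u := by
      simpa using (Complex.ofRealCLM.hasDerivAt (x := u)).const_mul Complex.I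
    have := ((hder0 u).sub_const 1).sub h1
    exact this.congr_deriv (by ring)
  have hint : ∫ u in (0:ℝ)..x, Complex.I * (Complex.exp (Complex.I * u) - 1)
      = (Complex.exp (Complex.I * x) - 1 - Complex.I * x)
        - (Complex.exp (Complex.I * 0) - 1 - Complex.I * 0) := by
    apply intervalIntegral.integral_eq_sub_of_hasDerivAt (fun u _ => hder u)
    exact (Continuous.intervalIntegrable (by continuity) _ _)
  have hb : ‖∫ u in (0:ℝ)..x, Complex.I * (Complex.exp (Complex.I * u) - 1)‖
      ≤ |∫ u in (0:ℝ)..x, u| := by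
    apply intervalIntegral.norm_integral_le_abs_of_norm_le
    · rw [MeasureTheory.ae_restrict_iff' measurableSet_uIoc]
      filter_upwards with t hmem
      rw [Set.uIoc_of_le hx] at hmem
      have := aux0 hmem.1.le
      simpa using this
    · exact (Continuous.intervalIntegrable (by continuity) _ _)
  rw [hint] at hb
  simp only [Complex.ofReal_zero, mul_zero, Complex.exp_zero, sub_self, sub_zero] at hb
  rw [integral_id, show ((x:ℝ)^2 - 0^2)/2 = x^2/2 by ring] at hb
  rwa [_root_.abs_of_nonneg (by positivity)] at hb

lemma aux2 (x : ℝ) :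
    ‖Complex.exp (Complex.I * x) - 1 - Complex.I * x + (x:ℂ) ^ 2 / 2‖ ≤ |x| ^ 3 / 6 := by
  have key : ∀ y : ℝ, 0 ≤ y →
      ‖Complex.exp (Complex.I * y) - 1 - Complex.I * y + (y:ℂ) ^ 2 / 2‖ ≤ y ^ 3 / 6 := by
    intro y hy
    have hder : ∀ u : ℝ, HasDerivAt
        (fun v : ℝ => Complex.exp (Complex.I * v) - 1 - Complex.I * v + (v:ℂ) ^ 2 / 2)
        (Complex.I * (Complex.exp (Complex.I * u) - 1 - Complex.I * u)) u := by
      intro u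
      have h1 : HasDerivAt (fun v : ℝ => (Complex.I * v : ℂ)) Complex.I u := by
        simpa using (Complex.ofRealCLM.hasDerivAt (x := u)).const_mul Complex.I
      have h3 : HasDerivAt (fun v : ℝ => ((v:ℂ))) 1 u := by
        exact Complex.ofRealCLM.hasDerivAt (x := u)
      have h2 : HasDerivAt (fun v : ℝ => ((v:ℂ) ^ 2 / 2)) ((u:ℂ)) u := by
        have heq : (fun v : ℝ => ((v:ℂ) ^ 2 / 2)) = fun v : ℝ => ((v:ℂ) * (v:ℂ)) / 2 := by
          ext v; ring
        rw [heq]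
        have := (h3.mul h3).div_const 2
        exact this.congr_deriv (by ring)
      have := (((hder0 u).sub_const 1).sub h1).add h2
      refine this.congr_deriv ?_
      rw [mul_sub, mul_sub, mul_one, ← mul_assoc, Complex.I_mul_I]
      ring
    have hint : ∫ u in (0:ℝ)..y, Complex.I * (Complex.exp (Complex.I * u) - 1 - Complex.I * u)
        = (Complex.exp (Complex.I * y) - 1 - Complex.I * y + (y:ℂ) ^ 2 / 2)
          - (Complex.exp (Complex.I * 0) - 1 - Complex.I * 0 + ((0:ℝ):ℂ) ^ 2 / 2) := by
      apply intervalIntegral.integral_eq_sub_of_hasDerivAt (fun u _ => hder u)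
      exact (Continuous.intervalIntegrable (by continuity) _ _)
    have hb : ‖∫ u in (0:ℝ)..y, Complex.I * (Complex.exp (Complex.I * u) - 1 - Complex.I * u)‖
        ≤ |∫ u in (0:ℝ)..y, u ^ 2 / 2| := by
      apply intervalIntegral.norm_integral_le_abs_of_norm_le
      · rw [MeasureTheory.ae_restrict_iff' measurableSet_uIoc]
        filter_upwards with t hmem
        rw [Set.uIoc_of_le hy] at hmem
        have := aux1 hmem.1.le
        simpa using this
      · exact (Continuous.intervalIntegrable (by continuity) _ _)
    rw [hint] at hb
    simp only [Complex.ofReal_zero, mul_zero, Complex.exp_zero, sub_self, sub_zero,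
      ne_eq, OfNat.ofNat_ne_zero, not_false_eq_true, zero_pow, zero_div, add_zero] at hb
    rw [intervalIntegral.integral_div, integral_pow] at hb
    have heval : |((y ^ (2+1) - 0 ^ (2+1)) / ((2:ℕ) + 1) / 2 : ℝ)| = y ^ 3 / 6 := by
      rw [show ((y ^ (2+1) - 0 ^ (2+1)) / ((2:ℕ) + 1) / 2 : ℝ) = y ^ 3 / 6 by push_cast; ring,
        _root_.abs_of_nonneg (by positivity)]
    rw [heval] at hb
    exact hb
  rcases le_or_gt 0 x with hx | hx
  · rw [_root_.abs_of_nonneg hx]; exact key x hx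
  · have h := key (-x) (by linarith)
    have hconj : Complex.exp (Complex.I * ((-x : ℝ) : ℂ)) - 1 - Complex.I * ((-x : ℝ) : ℂ)
          + ((-x:ℝ):ℂ) ^ 2 / 2
        = (starRingEnd ℂ) (Complex.exp (Complex.I * x) - 1 - Complex.I * x + (x:ℂ) ^ 2 / 2) := by
      rw [map_add, map_sub, map_sub, ← Complex.exp_conj, map_mul, map_div₀, map_pow,
        Complex.conj_I, Complex.conj_ofReal]
      push_cast
      ring_nf
      simp [Complex.conj_ofReal, map_ofNat]
      ring
    rw [hconj, RCLike.norm_conj] at h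
    rw [_root_.abs_of_neg hx]
    exact h

open Filter


lemma tendsto_pow_exp_of_mul_sub_one {z : ℕ → ℂ} {M : ℕ → ℕ}
    (hM : Tendsto M atTop atTop) {w : ℂ}
    (h : Tendsto (fun n => (M n : ℂ) * (z n - 1)) atTop (nhds w)) :
    Tendsto (fun n => z n ^ M n) atTop (nhds (Complex.exp w)) := by
  have hM0 : ∀ᶠ n in atTop, 0 < M n := hM.eventually_gt_atTop 0
  have hMinv : Tendsto (fun n => ((M n : ℝ))⁻¹) atTop (nhds 0) :=
    (tendsto_natCast_atTop_iff.mpr hM).inv_tendsto_atTop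
  have hMinvC : Tendsto (fun n => ((M n : ℂ))⁻¹) atTop (nhds 0) := by
    have := (Complex.continuous_ofReal.tendsto 0).comp hMinv
    refine Tendsto.congr (fun n => ?_) (by simpa using this)
    simp
  have hz1 : Tendsto (fun n => z n - 1) atTop (nhds 0) := by
    have h2 := h.mul hMinvC
    rw [mul_zero] at h2
    refine h2.congr' ?_
    filter_upwards [hM0] with n hn
    have : (M n : ℂ) ≠ 0 := Nat.cast_ne_zero.mpr hn.ne'
    field_simp
  have hz : Tendsto z atTop (nhds 1) := by
    have := hz1.add (tendsto_const_nhds : Tendsto (fun _ : ℕ => (1:ℂ)) atTop (nhds 1))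
    simpa using this
  set g : ℂ → ℂ := fun u => if u = 0 then 1 else Complex.log (1 + u) / u with hgdef
  have hg : Tendsto g (nhds 0) (nhds 1) := by
    have h1mem : (1 : ℂ) ∈ Complex.slitPlane := by
      simp [Complex.mem_slitPlane_iff]
    have hd0 : HasDerivAt (fun u : ℂ => Complex.log (1 + u)) 1 0 := by
      have hinner : HasDerivAt (fun u : ℂ => 1 + u) 1 0 := (hasDerivAt_id 0).const_add 1
      have := (Complex.hasDerivAt_log (by simpa using h1mem)).comp 0 hinner
      exact this.congr_deriv (by simp)
    rw [hasDerivAt_iff_tendsto_slope] at hd0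
    rw [← nhdsNE_sup_pure (0 : ℂ), tendsto_sup]
    constructor
    · refine hd0.congr' ?_
      filter_upwards [self_mem_nhdsWithin] with u hu
      simp only [Set.mem_compl_iff, Set.mem_singleton_iff] at hu
      simp [slope_def_field, hgdef, hu, Complex.log_one]
    · rw [tendsto_pure_left]
      intro s hs
      simpa [hgdef] using mem_of_mem_nhds hs
  have hMlog : Tendsto (fun n => (M n : ℂ) * Complex.log (z n)) atTop (nhds w) := by
    have hcomp := h.mul (hg.comp hz1)
    rw [mul_one] at hcomp
    refine hcomp.congr (fun n => ?_)
    by_cases hzn : z n = 1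
    · simp [hzn, hgdef, Complex.log_one]
    · have hne : z n - 1 ≠ 0 := sub_ne_zero.mpr hzn
      simp only [hgdef, Function.comp_apply, if_neg hne]
      rw [show (1 : ℂ) + (z n - 1) = z n by ring]
      field_simp
  have hzne : ∀ᶠ n in atTop, z n ≠ 0 := hz.eventually_ne one_ne_zero
  have hfin : Tendsto (fun n => Complex.exp ((M n : ℂ) * Complex.log (z n))) atTop
      (nhds (Complex.exp w)) := (Complex.continuous_exp.tendsto w).comp hMlog
  refine hfin.congr' ?_
  filter_upwards [hzne] with n hn
  rw [Complex.exp_nat_mul, Complex.exp_log hn]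



/-- Deterministic characteristic-function limit for centered triangular
arrays: if the rows `a n 1, …, a n n ∈ ℝ^d` sum to zero, have empirical second moments
converging to `D` and uniformly bounded empirical third moments, and `M n / n → c ∈ (0, ∞)`,
then `[(1/n) ∑ j, exp(i (√n / M n) tᵀ a n j)]^(M n) → exp(-tᵀ D t / (2c))`. -/
theorem bootstrap_char_fun_limit (d : ℕ) (hd : 1 ≤ d) (c : ℝ) (hc : 0 < c)
    (C : ℝ) (hC : 0 ≤ C) (D : Matrix (Fin d) (Fin d) ℝ)
    (a : (n : ℕ) → Fin n → EuclideanSpace ℝ (Fin d))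
    (hzero : ∀ n, ∑ j, a n j = 0)
    (hcov : ∀ k l, Tendsto (fun n : ℕ => (1 / (n : ℝ)) * ∑ j, a n j k * a n j l)
        atTop (nhds (D k l)))
    (hthird : ∀ n : ℕ, (1 / (n : ℝ)) * ∑ j, ‖a n j‖ ^ 3 ≤ C)
    (M : ℕ → ℕ) (hM : Tendsto (fun n : ℕ => (M n : ℝ) / n) atTop (nhds c))
    (t : EuclideanSpace ℝ (Fin d)) :
    Tendsto
      (fun n : ℕ => ((1 / (n : ℂ)) * ∑ j, Complex.exp
          (Complex.I * ((Real.sqrt n / M n * ⟪t, a n j⟫ : ℝ) : ℂ))) ^ M n)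
      atTop
      (nhds (Complex.exp (-(((∑ k, ∑ l, t k * D k l * t l) / (2 * c) : ℝ) : ℂ)))) := by
  classical
  set Q : ℝ := ∑ k, ∑ l, t k * D k l * t l with hQdef
  set s : (n : ℕ) → Fin n → ℝ := fun n j => Real.sqrt n / M n * ⟪t, a n j⟫ with hsdef
  set z : ℕ → ℂ := fun n => (1 / (n : ℂ)) * ∑ j, Complex.exp (Complex.I * ((s n j : ℝ) : ℂ))
    with hzdef
  -- M tends to infinity
  have hMev : ∀ᶠ n in atTop, c / 2 < (M n : ℝ) / n :=
    hM.eventually (eventually_gt_nhds (by linarith))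
  have hMtop : Tendsto M atTop atTop := by
    rw [← tendsto_natCast_atTop_iff (R := ℝ)]
    refine tendsto_atTop_mono' atTop ?_
      ((tendsto_natCast_atTop_atTop (R := ℝ)).const_mul_atTop (show (0:ℝ) < c/2 by linarith))
    filter_upwards [hMev, eventually_ge_atTop 1] with n h1 h2
    have hn : (0:ℝ) < n := by exact_mod_cast h2
    rw [lt_div_iff₀ hn] at h1
    linarith
  have hMpos : ∀ᶠ n in atTop, 0 < M n := hMtop.eventually_gt_atTop 0
  -- n / M n → c⁻¹
  have hndiv : Tendsto (fun n : ℕ => (n : ℝ) / M n) atTop (nhds c⁻¹) := by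
    refine (hM.inv₀ hc.ne').congr fun n => ?_
    rw [inv_div]
  -- quadratic-form limit
  have hT : Tendsto (fun n : ℕ => (1 / (n : ℝ)) * ∑ j, (⟪t, a n j⟫ : ℝ) ^ 2) atTop (nhds Q) := by
    have hlim : Tendsto (fun n : ℕ => ∑ k, ∑ l,
        (t k * t l) * ((1 / (n : ℝ)) * ∑ j, a n j k * a n j l)) atTop
        (nhds (∑ k, ∑ l, (t k * t l) * D k l)) := by
      refine tendsto_finset_sum _ (fun k _ => tendsto_finset_sum _ (fun l _ => ?_))
      exact (hcov k l).const_mul _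
    have hQ2 : (∑ k, ∑ l, (t k * t l) * D k l) = Q := by
      refine Finset.sum_congr rfl fun k _ => Finset.sum_congr rfl fun l _ => by ring
    rw [hQ2] at hlim
    refine hlim.congr fun n => ?_
    have hinner : ∀ j : Fin n, (⟪t, a n j⟫ : ℝ) = ∑ k, t k * a n j k := fun j => by
      simp [PiLp.inner_apply, RCLike.inner_apply, conj_trivial, mul_comm]
    calc ∑ k, ∑ l, (t k * t l) * ((1 / (n : ℝ)) * ∑ j, a n j k * a n j l)
        = ∑ k, ∑ l, ∑ j, (1 / (n : ℝ)) * ((t k * a n j k) * (t l * a n j l)) := by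
          refine Finset.sum_congr rfl fun k _ => Finset.sum_congr rfl fun l _ => ?_
          rw [Finset.mul_sum, Finset.mul_sum]
          exact Finset.sum_congr rfl fun j _ => by ring
      _ = ∑ k, ∑ j, ∑ l, (1 / (n : ℝ)) * ((t k * a n j k) * (t l * a n j l)) :=
          Finset.sum_congr rfl fun k _ => Finset.sum_comm
      _ = ∑ j, ∑ k, ∑ l, (1 / (n : ℝ)) * ((t k * a n j k) * (t l * a n j l)) :=
          Finset.sum_comm
      _ = (1 / (n : ℝ)) * ∑ j, (⟪t, a n j⟫ : ℝ) ^ 2 := by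
          rw [Finset.mul_sum]
          refine Finset.sum_congr rfl fun j _ => ?_
          rw [hinner j, sq, Finset.sum_mul_sum, Finset.mul_sum]
          refine Finset.sum_congr rfl fun k _ => (Finset.mul_sum _ _ _).symm
  -- S limit
  set S : ℕ → ℝ := fun n => (n : ℝ) / M n * ((1 / (n : ℝ)) * ∑ j, (⟪t, a n j⟫ : ℝ) ^ 2) / 2
    with hSdef
  have hS : Tendsto S atTop (nhds (c⁻¹ * Q / 2)) := (hndiv.mul hT).div_const 2
  -- remainder term
  set R : ℕ → ℂ := fun n => ((M n : ℂ) / (n : ℂ)) * ∑ j,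
      (Complex.exp (Complex.I * ((s n j : ℝ) : ℂ)) - 1 - Complex.I * ((s n j : ℝ) : ℂ)
        + ((s n j : ℝ) : ℂ) ^ 2 / 2) with hRdef
  have hsqrtinv : Tendsto (fun n : ℕ => (Real.sqrt n)⁻¹) atTop (nhds 0) := by
    have h1 : Tendsto (fun n : ℕ => ((n : ℝ))⁻¹) atTop (nhds 0) :=
      (tendsto_natCast_atTop_atTop (R := ℝ)).inv_tendsto_atTop
    have h2 := (Real.continuous_sqrt.tendsto 0).comp h1
    rw [Real.sqrt_zero] at h2
    refine h2.congr fun n => ?_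
    simp [Real.sqrt_inv]
  have hRlim : Tendsto R atTop (nhds 0) := by
    have hBlim : Tendsto (fun n : ℕ => (‖t‖ ^ 3 * C / 6) * (((n : ℝ) / M n) ^ 2
        * (Real.sqrt n)⁻¹)) atTop (nhds 0) := by
      have := ((hndiv.pow 2).mul hsqrtinv).const_mul (‖t‖ ^ 3 * C / 6)
      simpa using this
    refine squeeze_zero_norm' ?_ hBlim
    filter_upwards [hMpos, eventually_ge_atTop 1] with n hMn hn1
    have hn : (0:ℝ) < n := by exact_mod_cast hn1
    have hMn' : (0:ℝ) < M n := by exact_mod_cast hMn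
    have hsq : (0:ℝ) < Real.sqrt n := Real.sqrt_pos.mpr hn
    -- bound each summand
    have hsummand : ∀ j : Fin n,
        ‖Complex.exp (Complex.I * ((s n j : ℝ) : ℂ)) - 1 - Complex.I * ((s n j : ℝ) : ℂ)
          + ((s n j : ℝ) : ℂ) ^ 2 / 2‖ ≤ (Real.sqrt n / M n) ^ 3 * (‖t‖ ^ 3 * ‖a n j‖ ^ 3) / 6 := by
      intro j
      refine (aux2 (s n j)).trans ?_
      have habs : |s n j| ≤ Real.sqrt n / M n * (‖t‖ * ‖a n j‖) := by
        rw [hsdef]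
        simp only
        rw [abs_mul, _root_.abs_of_nonneg (by positivity : (0:ℝ) ≤ Real.sqrt n / M n)]
        exact mul_le_mul_of_nonneg_left (abs_real_inner_le_norm t (a n j)) (by positivity)
      have h3 : |s n j| ^ 3 ≤ (Real.sqrt n / M n * (‖t‖ * ‖a n j‖)) ^ 3 :=
        pow_le_pow_left₀ (abs_nonneg _) habs 3
      calc |s n j| ^ 3 / 6 ≤ (Real.sqrt n / M n * (‖t‖ * ‖a n j‖)) ^ 3 / 6 := by linarith
        _ = (Real.sqrt n / M n) ^ 3 * (‖t‖ ^ 3 * ‖a n j‖ ^ 3) / 6 := by ring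
    have hsum3 : ∑ j, ‖a n j‖ ^ 3 ≤ n * C := by
      have := hthird n
      rw [div_mul_eq_mul_div, one_mul, div_le_iff₀ hn] at this
      linarith [this]
    have hnorm : ‖R n‖ ≤ ((M n : ℝ) / n) * ((Real.sqrt n / M n) ^ 3 * (‖t‖ ^ 3 * (n * C)) / 6) := by
      rw [hRdef]
      simp only
      rw [norm_mul]
      have h1 : ‖((M n : ℂ) / (n : ℂ))‖ = (M n : ℝ) / n := by
        rw [norm_div]
        simp
      rw [h1]
      refine mul_le_mul_of_nonneg_left ?_ (by positivity)
      refine (norm_sum_le _ _).trans ?_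
      calc ∑ j, ‖Complex.exp (Complex.I * ((s n j : ℝ) : ℂ)) - 1 - Complex.I * ((s n j : ℝ) : ℂ)
            + ((s n j : ℝ) : ℂ) ^ 2 / 2‖
          ≤ ∑ j, (Real.sqrt n / M n) ^ 3 * (‖t‖ ^ 3 * ‖a n j‖ ^ 3) / 6 :=
            Finset.sum_le_sum fun j _ => hsummand j
        _ = (Real.sqrt n / M n) ^ 3 * ‖t‖ ^ 3 * (∑ j, ‖a n j‖ ^ 3) / 6 := by
            rw [← Finset.sum_div]
            congr 1
            rw [Finset.mul_sum]
            refine Finset.sum_congr rfl fun j _ => by ring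
        _ ≤ (Real.sqrt n / M n) ^ 3 * (‖t‖ ^ 3 * (n * C)) / 6 := by
            have h0 : (0:ℝ) ≤ (Real.sqrt n / M n) ^ 3 := by positivity
            have := mul_le_mul_of_nonneg_left hsum3 (mul_nonneg h0 (by positivity : (0:ℝ) ≤ ‖t‖^3))
            calc (Real.sqrt n / M n) ^ 3 * ‖t‖ ^ 3 * (∑ j, ‖a n j‖ ^ 3) / 6
                = ((Real.sqrt n / M n) ^ 3 * ‖t‖ ^ 3) * (∑ j, ‖a n j‖ ^ 3) / 6 := by ring
              _ ≤ ((Real.sqrt n / M n) ^ 3 * ‖t‖ ^ 3) * (n * C) / 6 := by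
                  apply div_le_div_of_nonneg_right ?_ (by norm_num)
                  · exact this
              _ = (Real.sqrt n / M n) ^ 3 * (‖t‖ ^ 3 * (n * C)) / 6 := by ring
    refine hnorm.trans (le_of_eq ?_)
    have hs2 : Real.sqrt n ^ 2 = (n:ℝ) := Real.sq_sqrt hn.le
    have h4 : (Real.sqrt n) ^ 3 * Real.sqrt n = (n:ℝ) ^ 2 := by
      rw [← pow_succ, show (3+1) = 2*2 by norm_num, pow_mul, hs2]
    field_simp
    linear_combination (‖t‖ ^ 3 * C) * h4
  -- the key identity
  have hkey : ∀ᶠ n in atTop, (M n : ℂ) * (z n - 1) = R n - ((S n : ℝ) : ℂ) := by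
    filter_upwards [hMpos, eventually_ge_atTop 1] with n hMn hn1
    have hn : (0:ℝ) < n := by exact_mod_cast hn1
    have hnC : (n : ℂ) ≠ 0 := by exact_mod_cast hn.ne'
    have hMC : (M n : ℂ) ≠ 0 := by exact_mod_cast (Nat.cast_ne_zero (R := ℂ)).mpr hMn.ne'
    have hMR : ((M n : ℝ)) ≠ 0 := by exact_mod_cast hMn.ne'
    -- sum of s vanishes
    have hsum0 : ∑ j, s n j = 0 := by
      rw [hsdef]
      simp only
      rw [← Finset.mul_sum]
      have : ∑ j, (⟪t, a n j⟫ : ℝ) = 0 := by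
        rw [← inner_sum, hzero, inner_zero_right]
      rw [this, mul_zero]
    have hsum0C : ∑ j, ((s n j : ℝ) : ℂ) = 0 := by
      rw [← Complex.ofReal_sum, hsum0, Complex.ofReal_zero]
    -- square identity
    have hsq : ∑ j, (s n j) ^ 2 = (n : ℝ) / (M n) ^ 2 * ∑ j, (⟪t, a n j⟫ : ℝ) ^ 2 := by
      rw [Finset.mul_sum]
      refine Finset.sum_congr rfl fun j _ => ?_
      rw [hsdef]
      simp only
      rw [mul_pow, div_pow, Real.sq_sqrt hn.le]
    have hSr : (M n : ℝ) / n * ((∑ j, (s n j) ^ 2) / 2) = S n := by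
      rw [hsq, hSdef]
      field_simp
    -- z n - 1 as a sum
    have hz1 : z n - 1 = (1 / (n : ℂ)) * ∑ j, (Complex.exp (Complex.I * ((s n j : ℝ) : ℂ)) - 1) := by
      rw [hzdef]
      simp only
      rw [Finset.sum_sub_distrib, Finset.sum_const, Finset.card_univ, Fintype.card_fin,
        nsmul_eq_mul, mul_one]
      field_simp
    rw [hz1, hRdef]
    simp only
    have hsplit : ∑ j, (Complex.exp (Complex.I * ((s n j : ℝ) : ℂ)) - 1)
        = (∑ j, (Complex.exp (Complex.I * ((s n j : ℝ) : ℂ)) - 1 - Complex.I * ((s n j : ℝ) : ℂ)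
            + ((s n j : ℝ) : ℂ) ^ 2 / 2))
          + Complex.I * (∑ j, ((s n j : ℝ) : ℂ)) - (∑ j, ((s n j : ℝ) : ℂ) ^ 2) / 2 := by
      rw [Finset.mul_sum, Finset.sum_div, ← Finset.sum_add_distrib, ← Finset.sum_sub_distrib]
      refine Finset.sum_congr rfl fun j _ => by ring
    rw [hsplit, hsum0C, mul_zero, add_zero]
    have hcast : ((S n : ℝ) : ℂ) = (M n : ℂ) / (n : ℂ) * ((∑ j, ((s n j : ℝ) : ℂ) ^ 2) / 2) := by
      rw [← hSr]
      push_cast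
      ring
    rw [hcast]
    field_simp
    ring
  -- assemble
  have hScast : Tendsto (fun n => ((S n : ℝ) : ℂ)) atTop (nhds ((c⁻¹ * Q / 2 : ℝ) : ℂ)) :=
    (Complex.continuous_ofReal.tendsto _).comp hS
  have hE : Tendsto (fun n => (M n : ℂ) * (z n - 1)) atTop
      (nhds (-(((Q / (2 * c) : ℝ)) : ℂ))) := by
    have h0 := hRlim.sub hScast
    rw [zero_sub] at h0
    have hre : c⁻¹ * Q / 2 = Q / (2 * c) := by
      rw [inv_mul_eq_div, div_div, mul_comm c 2]
    rw [hre] at h0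
    exact Tendsto.congr' (hkey.mono fun n hn => hn.symm) h0
  exact tendsto_pow_exp_of_mul_sub_one hMtop hE
end

section
/- Let (b_j)_{j≥1} be i.i.d. random vectors in ℝ^d with E‖b_1‖³ < ∞ and covariance matrix D = E[(b_1 − Eb_1)(b_1 − Eb_1)ᵀ]. Let (M_n) be natural numbers with M_n / n → c ∈ (0, ∞). Then for every t ∈ ℝ^d, almost surely, [ (1/n) ∑_{j=1}^n exp( i (√n / M_n) tᵀ (b_j − b̄_n) ) ]^{M_n} → exp( −tᵀ D t / (2c) ) as n → ∞, where b̄_n = (1/n) ∑_{j=1}^n b_j. -/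
open Filter MeasureTheory
open scoped RealInnerProductSpace

private lemma mvt_abs (f f' : ℝ → ℝ) (hf : ∀ s, HasDerivAt f (f' s) s) (h0 : f 0 = 0)
    (C : ℝ) (x : ℝ) (hb : ∀ s, |s| ≤ |x| → |f' s| ≤ C) : |f x| ≤ C * |x| := by
  have hmem : ∀ s : ℝ, |s| ≤ |x| → s ∈ Set.Icc (-|x|) (|x|) := by
    intro s hs
    exact Set.mem_Icc.2 ⟨neg_le_of_abs_le hs |>.trans_eq' rfl, le_of_abs_le hs⟩
  have := Convex.norm_image_sub_le_of_norm_hasDerivWithin_le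
    (f := f) (f' := f') (s := Set.Icc (-|x|) (|x|)) (C := C)
    (fun s hs => (hf s).hasDerivWithinAt)
    (fun s hs => by
      rw [Real.norm_eq_abs]
      exact hb s (abs_le.2 ⟨hs.1, hs.2⟩))
    (convex_Icc _ _)
    (hmem 0 (by simp))
    (hmem x le_rfl)
  simpa [h0, Real.norm_eq_abs] using this

private lemma abs_sin_le_abs' (x : ℝ) : |Real.sin x| ≤ |x| := by
  simpa using mvt_abs Real.sin Real.cos (fun s => Real.hasDerivAt_sin s) (by simp) 1 x
    (fun s _ => by rw [abs_le]; exact ⟨Real.neg_one_le_cos s, Real.cos_le_one s⟩)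

private lemma abs_cos_sub_one_le_abs (x : ℝ) : |Real.cos x - 1| ≤ |x| := by
  simpa using mvt_abs (fun s => Real.cos s - 1) (fun s => -Real.sin s)
    (fun s => ((Real.hasDerivAt_cos s).sub_const 1)) (by simp) 1 x
    (fun s _ => by rw [abs_neg, abs_le]; exact ⟨Real.neg_one_le_sin s, Real.sin_le_one s⟩)

private lemma abs_cos_sub_one_le_sq (x : ℝ) : |Real.cos x - 1| ≤ x ^ 2 := by
  have := mvt_abs (fun s => Real.cos s - 1) (fun s => -Real.sin s)
    (fun s => ((Real.hasDerivAt_cos s).sub_const 1)) (by simp) |x| x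
    (fun s hs => by rw [abs_neg]; exact (abs_sin_le_abs' s).trans hs)
  calc |Real.cos x - 1| ≤ |x| * |x| := this
    _ = x ^ 2 := by rw [← abs_mul, ← sq, abs_sq]

private lemma abs_sin_sub_le_sq (x : ℝ) : |Real.sin x - x| ≤ x ^ 2 := by
  have := mvt_abs (fun s => Real.sin s - s) (fun s => Real.cos s - 1)
    (fun s => ((Real.hasDerivAt_sin s).sub (hasDerivAt_id s))) (by simp) |x| x
    (fun s hs => (abs_cos_sub_one_le_abs s).trans hs)
  calc |Real.sin x - x| ≤ |x| * |x| := this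
    _ = x ^ 2 := by rw [← abs_mul, ← sq, abs_sq]

private lemma abs_sin_sub_le_cube (x : ℝ) : |Real.sin x - x| ≤ |x| ^ 3 := by
  have := mvt_abs (fun s => Real.sin s - s) (fun s => Real.cos s - 1)
    (fun s => ((Real.hasDerivAt_sin s).sub (hasDerivAt_id s))) (by simp) (x ^ 2) x
    (fun s hs => (abs_cos_sub_one_le_sq s).trans (by
      have : |s| ^ 2 ≤ |x| ^ 2 := pow_le_pow_left₀ (abs_nonneg s) hs 2
      simpa [sq_abs] using this))
  calc |Real.sin x - x| ≤ x ^ 2 * |x| := this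
    _ = |x| ^ 3 := by rw [← sq_abs]; ring

private lemma abs_cos_taylor (x : ℝ) : |Real.cos x - 1 + x ^ 2 / 2| ≤ |x| ^ 3 := by
  have := mvt_abs (fun s => Real.cos s - 1 + s ^ 2 / 2) (fun s => -Real.sin s + s)
    (fun s => (((Real.hasDerivAt_cos s).sub_const 1).add
      (by simpa using ((hasDerivAt_pow 2 s).div_const 2)))) (by simp) (x ^ 2) x
    (fun s hs => by
      have h1 : |-Real.sin s + s| = |Real.sin s - s| := by rw [← abs_neg]; ring_nf
      rw [h1]
      refine (abs_sin_sub_le_sq s).trans ?_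
      have : |s| ^ 2 ≤ |x| ^ 2 := pow_le_pow_left₀ (abs_nonneg s) hs 2
      simpa [sq_abs] using this)
  calc |Real.cos x - 1 + x ^ 2 / 2| ≤ x ^ 2 * |x| := this
    _ = |x| ^ 3 := by rw [← sq_abs]; ring

/-- Second-order Taylor bound for `exp (I x)`, valid for all real `x`. -/
private lemma exp_I_taylor (x : ℝ) :
    ‖Complex.exp (Complex.I * x) - (1 + Complex.I * x - (x : ℂ) ^ 2 / 2)‖ ≤ 2 * |x| ^ 3 := by
  have h1 : Complex.exp (Complex.I * x) = (Real.cos x : ℂ) + (Real.sin x : ℂ) * Complex.I := by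
    rw [mul_comm, Complex.exp_mul_I, ← Complex.ofReal_cos, ← Complex.ofReal_sin]
  set z := Complex.exp (Complex.I * x) - (1 + Complex.I * x - (x : ℂ) ^ 2 / 2) with hz
  clear_value z
  have h2 : z = ((Real.cos x - 1 + x ^ 2 / 2 : ℝ) : ℂ) + ((Real.sin x - x : ℝ) : ℂ) * Complex.I := by
    rw [hz, h1]; push_cast; ring
  have hre : z.re = Real.cos x - 1 + x ^ 2 / 2 := by
    simp [h2, Complex.cos_ofReal_re, ← Complex.ofReal_pow]
  have him : z.im = Real.sin x - x := by
    simp [h2, Complex.sin_ofReal_re, ← Complex.ofReal_pow]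
  calc ‖z‖ ≤ |z.re| + |z.im| := Complex.norm_le_abs_re_add_abs_im z
    _ ≤ |x| ^ 3 + |x| ^ 3 := by
        rw [hre, him]
        exact add_le_add (abs_cos_taylor x) (abs_sin_sub_le_cube x)
    _ = 2 * |x| ^ 3 := by ring

/-- If `M n → ∞` and `M n * (z n - 1) → L`, then `z n ^ M n → exp L`. -/
private lemma pow_lim (z : ℕ → ℂ) (M : ℕ → ℕ) (L : ℂ)
    (hMtop : Tendsto M atTop atTop)
    (h : Tendsto (fun n => (M n : ℂ) * (z n - 1)) atTop (nhds L)) :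
    Tendsto (fun n => z n ^ M n) atTop (nhds (Complex.exp L)) := by
  have hinv : Tendsto (fun n => ((M n : ℂ))⁻¹) atTop (nhds 0) := by
    apply squeeze_zero_norm (a := fun n => ((M n : ℝ))⁻¹)
    · intro n; simp
    · exact (tendsto_inv_atTop_zero).comp
        ((tendsto_natCast_atTop_atTop (R := ℝ)).comp hMtop)
  have hz1 : Tendsto (fun n => z n - 1) atTop (nhds 0) := by
    have := hinv.mul h
    rw [zero_mul] at this
    apply this.congr'
    filter_upwards [hMtop.eventually_ge_atTop 1] with n hn
    have : (M n : ℂ) ≠ 0 := by exact_mod_cast Nat.one_le_iff_ne_zero.mp hn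
    field_simp
  have hev : ∀ᶠ n in atTop, ‖z n - 1‖ ≤ 1 / 2 := by
    have := hz1.norm
    rw [norm_zero] at this
    exact this.eventually_le_const (by norm_num)
  have hrem : Tendsto (fun n => (M n : ℂ) * (Complex.log (z n) - (z n - 1))) atTop (nhds 0) := by
    apply squeeze_zero_norm' (a := fun n => ‖(M n : ℂ) * (z n - 1)‖ * ‖z n - 1‖)
    · filter_upwards [hev] with n hn
      have hlt : ‖z n - 1‖ < 1 := lt_of_le_of_lt hn (by norm_num)
      have h1 : Complex.log (z n) = Complex.log (1 + (z n - 1)) := by ring_nf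
      have hb := Complex.norm_log_one_add_sub_self_le hlt
      have h2 : (1 - ‖z n - 1‖)⁻¹ / 2 ≤ 1 := by
        rw [div_le_one (by norm_num)]
        rw [inv_le_comm₀ (by linarith) (by norm_num)]
        linarith
      calc ‖(M n : ℂ) * (Complex.log (z n) - (z n - 1))‖
          = (M n : ℝ) * ‖Complex.log (1 + (z n - 1)) - (z n - 1)‖ := by
            rw [norm_mul, ← h1]; simp
        _ ≤ (M n : ℝ) * (‖z n - 1‖ ^ 2 * ((1 - ‖z n - 1‖)⁻¹ / 2)) := by
            apply mul_le_mul_of_nonneg_left _ (by positivity)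
            calc ‖Complex.log (1 + (z n - 1)) - (z n - 1)‖
                ≤ ‖z n - 1‖ ^ 2 * (1 - ‖z n - 1‖)⁻¹ / 2 := hb
              _ = ‖z n - 1‖ ^ 2 * ((1 - ‖z n - 1‖)⁻¹ / 2) := by ring
        _ ≤ (M n : ℝ) * (‖z n - 1‖ ^ 2 * 1) := by
            apply mul_le_mul_of_nonneg_left _ (by positivity)
            exact mul_le_mul_of_nonneg_left h2 (by positivity)
        _ = ‖(M n : ℂ) * (z n - 1)‖ * ‖z n - 1‖ := by
            rw [norm_mul]; simp; ring
    · have := (h.norm).mul (hz1.norm)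
      simpa using this
  have hlog : Tendsto (fun n => (M n : ℂ) * Complex.log (z n)) atTop (nhds L) := by
    have := h.add hrem
    rw [add_zero] at this
    apply this.congr
    intro n; ring
  have hexp := (Complex.continuous_exp.tendsto L).comp hlog
  apply hexp.congr'
  filter_upwards [hev] with n hn
  have hz0 : z n ≠ 0 := by
    intro h0
    rw [h0] at hn
    simp at hn
    norm_num at hn
  simp only [Function.comp]
  rw [Complex.exp_nat_mul, Complex.exp_log hz0]

set_option maxHeartbeats 1000000 in
private lemma det_lemma (v : ℕ → ℝ) (M : ℕ → ℕ) (c m q r : ℝ) (hc : 0 < c)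
    (hM : Tendsto (fun n : ℕ => (M n : ℝ) / n) atTop (nhds c))
    (h1 : Tendsto (fun n : ℕ => (∑ j ∈ Finset.range n, v j) / n) atTop (nhds m))
    (h2 : Tendsto (fun n : ℕ => (∑ j ∈ Finset.range n, (v j) ^ 2) / n) atTop (nhds q))
    (h3 : Tendsto (fun n : ℕ => (∑ j ∈ Finset.range n, |v j| ^ 3) / n) atTop (nhds r)) :
    Tendsto (fun n : ℕ => ((1 / (n : ℂ)) * ∑ j ∈ Finset.range n, Complex.exp
        (Complex.I * ((Real.sqrt n / M n *
          (v j - (n : ℝ)⁻¹ * ∑ j' ∈ Finset.range n, v j') : ℝ) : ℂ))) ^ M n)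
      atTop (nhds (Complex.exp (-(((q - m ^ 2) / (2 * c) : ℝ) : ℂ)))) := by
  classical
  set μn : ℕ → ℝ := fun n => (n : ℝ)⁻¹ * ∑ j' ∈ Finset.range n, v j' with hμn
  set a : ℕ → ℝ := fun n => Real.sqrt n / M n with ha
  set θ : ℕ → ℕ → ℝ := fun n j => a n * (v j - μn n) with hθ
  set z : ℕ → ℂ := fun n => (1 / (n : ℂ)) * ∑ j ∈ Finset.range n,
      Complex.exp (Complex.I * ((θ n j : ℝ) : ℂ)) with hzdef
  set rem : ℕ → ℕ → ℂ := fun n j => Complex.exp (Complex.I * ((θ n j : ℝ) : ℂ))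
      - (1 + Complex.I * ((θ n j : ℝ) : ℂ) - ((θ n j : ℝ) : ℂ) ^ 2 / 2) with hrem
  set S2 : ℕ → ℝ := fun n => ∑ j ∈ Finset.range n, (v j - μn n) ^ 2 with hS2def
  set S3 : ℕ → ℝ := fun n => ∑ j ∈ Finset.range n, |v j - μn n| ^ 3 with hS3def
  set E : ℕ → ℂ := fun n => ((M n : ℂ) / n) * ∑ j ∈ Finset.range n, rem n j with hEdef
  set T : ℕ → ℝ := fun n => (n : ℝ) / (2 * M n) * (S2 n / n) with hTdef
  -- M n → ∞
  have hMtop : Tendsto M atTop atTop := by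
    rw [← tendsto_natCast_atTop_iff (R := ℝ)]
    have h := hM.pos_mul_atTop hc (tendsto_natCast_atTop_atTop (R := ℝ))
    apply h.congr'
    filter_upwards [eventually_ge_atTop 1] with n hn
    have hn0 : (n : ℝ) ≠ 0 := Nat.cast_ne_zero.mpr (by omega)
    field_simp
  have hMev : ∀ᶠ n in atTop, 1 ≤ M n := hMtop.eventually_ge_atTop 1
  -- limits
  have hμ : Tendsto μn atTop (nhds m) := h1.congr (fun n => div_eq_inv_mul _ _)
  have hnM : Tendsto (fun n : ℕ => (n : ℝ) / M n) atTop (nhds c⁻¹) := by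
    simpa [inv_div] using hM.inv₀ hc.ne'
  have hS2lim : Tendsto (fun n => S2 n / n) atTop (nhds (q - m ^ 2)) := by
    have lim := h2.sub (hμ.mul hμ)
    have hqm : q - m * m = q - m ^ 2 := by ring
    rw [hqm] at lim
    apply lim.congr'
    filter_upwards [eventually_ge_atTop 1] with n hn
    have hn0 : (n : ℝ) ≠ 0 := Nat.cast_ne_zero.mpr (by omega)
    have hsum : ∑ j ∈ Finset.range n, v j = n * μn n := by
      rw [hμn]; rw [← mul_assoc, mul_inv_cancel₀ hn0, one_mul]
    have hexp : S2 n = ∑ j ∈ Finset.range n, (v j) ^ 2 - n * (μn n) ^ 2 := by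
      show ∑ j ∈ Finset.range n, (v j - μn n) ^ 2 = _
      have hcg : ∀ j ∈ Finset.range n, (v j - μn n) ^ 2
          = (v j) ^ 2 - 2 * μn n * v j + (μn n) ^ 2 := fun j _ => by ring
      rw [Finset.sum_congr rfl hcg, Finset.sum_add_distrib, Finset.sum_sub_distrib,
        ← Finset.mul_sum, hsum, Finset.sum_const, Finset.card_range, nsmul_eq_mul]
      ring
    show _ = S2 n / (n : ℝ)
    rw [hexp, sub_div, mul_div_cancel_left₀ _ hn0, sq]
  -- sum of centered terms vanishes
  have hsum0 : ∀ n : ℕ, 1 ≤ n → ∑ j ∈ Finset.range n, (v j - μn n) = 0 := by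
    intro n hn
    have hn0 : (n : ℝ) ≠ 0 := Nat.cast_ne_zero.mpr (by omega)
    rw [Finset.sum_sub_distrib, Finset.sum_const, Finset.card_range, nsmul_eq_mul, hμn]
    rw [← mul_assoc, mul_inv_cancel₀ hn0, one_mul, sub_self]
  -- the key algebraic identity
  have hkey : ∀ᶠ n in atTop, (M n : ℂ) * (z n - 1) = E n - ((T n : ℝ) : ℂ) := by
    filter_upwards [eventually_ge_atTop 1, hMev] with n hn hMn
    have hn0 : (n : ℝ) ≠ 0 := Nat.cast_ne_zero.mpr (by omega)
    have hn0' : (n : ℂ) ≠ 0 := Nat.cast_ne_zero.mpr (by omega)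
    have hM0 : (M n : ℝ) ≠ 0 := Nat.cast_ne_zero.mpr (by omega)
    have hM0' : (M n : ℂ) ≠ 0 := Nat.cast_ne_zero.mpr (by omega)
    have hθsum : ∑ j ∈ Finset.range n, θ n j = 0 := by
      show ∑ j ∈ Finset.range n, a n * (v j - μn n) = 0
      rw [← Finset.mul_sum, hsum0 n hn, mul_zero]
    have hθ2 : ∑ j ∈ Finset.range n, (θ n j) ^ 2 = (a n) ^ 2 * S2 n := by
      show ∑ j ∈ Finset.range n, (a n * (v j - μn n)) ^ 2 = _
      rw [hS2def, Finset.mul_sum]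
      exact Finset.sum_congr rfl fun j _ => by ring
    have ha2 : (a n) ^ 2 = (n : ℝ) / (M n) ^ 2 := by
      show (Real.sqrt n / M n) ^ 2 = _
      rw [div_pow, Real.sq_sqrt (Nat.cast_nonneg n)]
    have hterm : ∀ j ∈ Finset.range n, Complex.exp (Complex.I * ((θ n j : ℝ) : ℂ))
        = rem n j + (1 + Complex.I * ((θ n j : ℝ) : ℂ) - ((θ n j : ℝ) : ℂ) ^ 2 / 2) :=
      fun j _ => by rw [hrem]; ring
    have hsplit : ∑ j ∈ Finset.range n, Complex.exp (Complex.I * ((θ n j : ℝ) : ℂ))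
        = (∑ j ∈ Finset.range n, rem n j) + ((n : ℂ)
          + Complex.I * ((∑ j ∈ Finset.range n, θ n j : ℝ) : ℂ)
          - ((∑ j ∈ Finset.range n, (θ n j) ^ 2 : ℝ) : ℂ) / 2) := by
      rw [Finset.sum_congr rfl hterm, Finset.sum_add_distrib]
      congr 1
      rw [Finset.sum_sub_distrib, Finset.sum_add_distrib, ← Finset.sum_div, ← Finset.mul_sum]
      push_cast
      simp
    rw [hθsum, hθ2, ha2] at hsplit
    have hz : z n = (1 / (n : ℂ)) * ∑ j ∈ Finset.range n,
        Complex.exp (Complex.I * ((θ n j : ℝ) : ℂ)) := rfl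
    rw [hz, hsplit, hEdef, hTdef]
    push_cast
    field_simp
    ring
  -- limit of T
  have hT : Tendsto (fun n => T n) atTop (nhds ((q - m ^ 2) / (2 * c))) := by
    have hhalf : Tendsto (fun n : ℕ => (n : ℝ) / (2 * M n)) atTop (nhds (c⁻¹ / 2)) := by
      have := hnM.div_const 2
      apply this.congr
      intro n
      ring
    have := hhalf.mul hS2lim
    have harith : c⁻¹ / 2 * (q - m ^ 2) = (q - m ^ 2) / (2 * c) := by
      rw [div_eq_mul_inv (q - m ^ 2), mul_inv]
      ring
    rw [harith] at this
    exact this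
  -- bound on S3
  have hS3b : ∀ n : ℕ, S3 n ≤ 4 * (∑ j ∈ Finset.range n, |v j| ^ 3) + 4 * n * |μn n| ^ 3 := by
    intro n
    have : S3 n ≤ ∑ j ∈ Finset.range n, (4 * |v j| ^ 3 + 4 * |μn n| ^ 3) := by
      apply Finset.sum_le_sum
      intro j _
      have habs : |v j - μn n| ≤ |v j| + |μn n| := by
        have := abs_add_le (v j) (-μn n)
        simpa [sub_eq_add_neg] using this
      have h3le : |v j - μn n| ^ 3 ≤ (|v j| + |μn n|) ^ 3 :=
        pow_le_pow_left₀ (abs_nonneg _) habs 3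
      refine h3le.trans ?_
      have hx : (0 : ℝ) ≤ |v j| := abs_nonneg _
      have hy : (0 : ℝ) ≤ |μn n| := abs_nonneg _
      nlinarith [mul_nonneg (add_nonneg hx hy) (sq_nonneg (|v j| - |μn n|))]
    refine this.trans ?_
    rw [Finset.sum_add_distrib, Finset.sum_const, Finset.card_range, ← Finset.mul_sum,
      nsmul_eq_mul]
    ring_nf
    exact le_refl _
  -- limit of E
  have hE : Tendsto E atTop (nhds 0) := by
    apply squeeze_zero_norm'
      (a := fun n : ℕ => 2 * ((1 / Real.sqrt n) * ((n : ℝ) / M n) ^ 2)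
        * (4 * ((∑ j ∈ Finset.range n, |v j| ^ 3) / n) + 4 * |μn n| ^ 3))
    · filter_upwards [eventually_ge_atTop 1, hMev] with n hn hMn
      have hn0 : (n : ℝ) ≠ 0 := Nat.cast_ne_zero.mpr (by omega)
      have hnpos : (0 : ℝ) < n := by positivity
      have hM0 : (M n : ℝ) ≠ 0 := Nat.cast_ne_zero.mpr (by omega)
      have hMpos : (0 : ℝ) < M n := by positivity
      have hsq : (0 : ℝ) < Real.sqrt n := Real.sqrt_pos.mpr hnpos
      have hann : 0 ≤ a n := div_nonneg (Real.sqrt_nonneg _) (le_of_lt hMpos)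
      -- step 1: norm of E n
      have step1 : ‖E n‖ ≤ (M n : ℝ) / n * ∑ j ∈ Finset.range n, ‖rem n j‖ := by
        rw [hEdef]
        rw [norm_mul]
        have h1 : ‖((M n : ℂ) / (n : ℂ))‖ = (M n : ℝ) / n := by
          rw [norm_div]
          simp
        rw [h1]
        exact mul_le_mul_of_nonneg_left (norm_sum_le _ _) (by positivity)
      -- step 2: termwise bound
      have step2 : ∑ j ∈ Finset.range n, ‖rem n j‖
          ≤ ∑ j ∈ Finset.range n, 2 * ((a n) ^ 3 * |v j - μn n| ^ 3) := by
        apply Finset.sum_le_sum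
        intro j _
        have := exp_I_taylor (θ n j)
        refine le_trans (by exact this) ?_
        have hθval : |θ n j| = a n * |v j - μn n| := by
          show |a n * (v j - μn n)| = _
          rw [abs_mul, abs_of_nonneg hann]
        rw [hθval]
        rw [mul_pow]
      have step3 : ∑ j ∈ Finset.range n, 2 * ((a n) ^ 3 * |v j - μn n| ^ 3)
          = 2 * (a n) ^ 3 * S3 n := by
        rw [hS3def, Finset.mul_sum]
        exact Finset.sum_congr rfl fun j _ => by ring
      have hS3n : S3 n ≤ 4 * (∑ j ∈ Finset.range n, |v j| ^ 3) + 4 * n * |μn n| ^ 3 := hS3b n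
      -- put together
      have chain : ‖E n‖ ≤ (M n : ℝ) / n * (2 * (a n) ^ 3
          * (4 * (∑ j ∈ Finset.range n, |v j| ^ 3) + 4 * n * |μn n| ^ 3)) := by
        refine step1.trans ?_
        refine mul_le_mul_of_nonneg_left ?_ (by positivity)
        refine (step2.trans (le_of_eq step3)).trans ?_
        have hpos : (0:ℝ) ≤ 2 * (a n) ^ 3 := by positivity
        exact mul_le_mul_of_nonneg_left hS3n hpos
      refine chain.trans (le_of_eq ?_)
      -- algebraic identity
      have haval : a n = Real.sqrt (n : ℝ) / M n := rfl
      rw [haval]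
      set s := Real.sqrt (n : ℝ) with hsdef
      have hs0 : s ≠ 0 := ne_of_gt hsq
      have hs2 : s * s = (n : ℝ) := Real.mul_self_sqrt (le_of_lt hnpos)
      rw [← hs2]
      field_simp
    · have hsqrtTop : Tendsto (fun n : ℕ => Real.sqrt n) atTop atTop := by
        apply tendsto_atTop_atTop.2
        intro bb
        refine ⟨Nat.ceil ((bb ⊔ 0) ^ 2), fun x hx => ?_⟩
        have hb : (bb ⊔ 0) ^ 2 ≤ (x : ℝ) := le_trans (Nat.le_ceil _) (by exact_mod_cast hx)
        calc bb ≤ bb ⊔ 0 := le_sup_left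
          _ = Real.sqrt ((bb ⊔ 0) ^ 2) := (Real.sqrt_sq le_sup_right).symm
          _ ≤ Real.sqrt x := Real.sqrt_le_sqrt hb
      have hsqrt : Tendsto (fun n : ℕ => 1 / Real.sqrt n) atTop (nhds 0) := by
        simpa [Pi.inv_def] using hsqrtTop.inv_tendsto_atTop
      have hfac : Tendsto (fun n : ℕ => 2 * ((1 / Real.sqrt n) * ((n : ℝ) / M n) ^ 2))
          atTop (nhds 0) := by
        have := (hsqrt.mul (hnM.pow 2)).const_mul 2
        simpa using this
      have hK : Tendsto (fun n : ℕ => 4 * ((∑ j ∈ Finset.range n, |v j| ^ 3) / n)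
          + 4 * |μn n| ^ 3) atTop (nhds (4 * r + 4 * |m| ^ 3)) :=
        (h3.const_mul 4).add (((hμ.abs).pow 3).const_mul 4)
      have := hfac.mul hK
      simpa using this
  -- conclusion via pow_lim
  have hlim : Tendsto (fun n => (M n : ℂ) * (z n - 1)) atTop
      (nhds (-(((q - m ^ 2) / (2 * c) : ℝ) : ℂ))) := by
    have hTc : Tendsto (fun n => ((T n : ℝ) : ℂ)) atTop
        (nhds (((q - m ^ 2) / (2 * c) : ℝ) : ℂ)) :=
      (Complex.continuous_ofReal.tendsto _).comp hT
    have := hE.sub hTc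
    rw [zero_sub] at this
    exact Tendsto.congr' (hkey.mono fun n h => h.symm) this
  exact pow_lim z M _ hMtop hlim

set_option maxHeartbeats 1000000 in
/-- If `(b j)` are i.i.d. random vectors in `ℝ^d` with `E‖b 0‖³ < ∞` and
covariance matrix `D`, and `M n / n → c ∈ (0, ∞)`, then for every `t ∈ ℝ^d`, almost surely,
`[(1/n) ∑_{j<n} exp(i (√n / M n) tᵀ (b j - b̄ n))]^(M n) → exp(-tᵀ D t / (2c))`. -/
theorem bootstrap_char_fun_limit_iid {Ω : Type*} [MeasurableSpace Ω]
    (P : Measure Ω) [IsProbabilityMeasure P] (d : ℕ) (hd : 1 ≤ d)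
    (b : ℕ → Ω → EuclideanSpace ℝ (Fin d)) (hbmeas : ∀ j, Measurable (b j))
    (hbindep : ProbabilityTheory.iIndepFun b P)
    (hbident : ∀ j, Measure.map (b j) P = Measure.map (b 0) P)
    (hmom : Integrable (fun ω => ‖b 0 ω‖ ^ 3) P)
    (D : Matrix (Fin d) (Fin d) ℝ)
    (hD : ∀ k l, D k l =
      ∫ ω, (b 0 ω k - ∫ ω', b 0 ω' k ∂P) * (b 0 ω l - ∫ ω', b 0 ω' l ∂P) ∂P)
    (c : ℝ) (hc : 0 < c) (M : ℕ → ℕ)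
    (hM : Tendsto (fun n : ℕ => (M n : ℝ) / n) atTop (nhds c))
    (t : EuclideanSpace ℝ (Fin d)) :
    ∀ᵐ ω ∂P, Tendsto
      (fun n : ℕ => ((1 / (n : ℂ)) * ∑ j ∈ Finset.range n, Complex.exp
          (Complex.I * ((Real.sqrt n / M n *
            ⟪t, b j ω - (n : ℝ)⁻¹ • ∑ j' ∈ Finset.range n, b j' ω⟫ : ℝ) : ℂ))) ^ M n)
      atTop
      (nhds (Complex.exp (-(((∑ k, ∑ l, t k * D k l * t l) / (2 * c) : ℝ) : ℂ)))) := by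
  classical
  have hcube1 : ∀ y : ℝ, 0 ≤ y → y ≤ 1 + y ^ 3 := by
    intro y hy; nlinarith [sq_nonneg (y - 1), sq_nonneg y, mul_nonneg hy (sq_nonneg (y - 1))]
  have hcube2 : ∀ y : ℝ, 0 ≤ y → y ^ 2 ≤ 1 + y ^ 3 := by
    intro y hy; nlinarith [sq_nonneg (y - 1), sq_nonneg y, mul_nonneg hy (sq_nonneg (y - 1))]
  have hdom : Integrable (fun ω => 1 + ‖b 0 ω‖ ^ 3) P := (integrable_const 1).add hmom
  have hg1m : Measurable fun x : EuclideanSpace ℝ (Fin d) => ⟪t, x⟫ :=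
    (Continuous.inner continuous_const continuous_id).measurable
  -- strong law of large numbers for nice functions of the b's
  have slln : ∀ g : EuclideanSpace ℝ (Fin d) → ℝ, Measurable g → ∀ C : ℝ,
      (∀ x, |g x| ≤ C * (1 + ‖x‖ ^ 3)) →
      ∀ᵐ ω ∂P, Tendsto (fun n : ℕ => (∑ j ∈ Finset.range n, g (b j ω)) / n) atTop
        (nhds (∫ ω, g (b 0 ω) ∂P)) := by
    intro g hg C hgb
    have hint : Integrable (fun ω => g (b 0 ω)) P := by
      apply Integrable.mono' (hdom.const_mul C)
      · exact (hg.comp (hbmeas 0)).aestronglyMeasurable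
      · exact ae_of_all _ fun ω => by rw [Real.norm_eq_abs]; exact hgb (b 0 ω)
    exact ProbabilityTheory.strong_law_ae_real (fun j ω => g (b j ω)) hint
      (fun i j hij => (hbindep.indepFun hij).comp hg hg)
      (fun i => (ProbabilityTheory.IdentDistrib.comp
        ⟨(hbmeas i).aemeasurable, (hbmeas 0).aemeasurable, hbident i⟩ hg))
  -- bounds for the three functions
  have hb1 : ∀ x : EuclideanSpace ℝ (Fin d), |⟪t, x⟫| ≤ ‖t‖ * ‖x‖ := fun x =>
    abs_real_inner_le_norm t x
  have hA : ∀ᵐ ω ∂P, Tendsto (fun n : ℕ => (∑ j ∈ Finset.range n, ⟪t, b j ω⟫) / n) atTop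
      (nhds (∫ ω, ⟪t, b 0 ω⟫ ∂P)) := by
    apply slln _ hg1m ‖t‖
    intro x
    refine (hb1 x).trans ?_
    exact mul_le_mul_of_nonneg_left (hcube1 _ (norm_nonneg x)) (norm_nonneg t)
  have hB : ∀ᵐ ω ∂P, Tendsto (fun n : ℕ => (∑ j ∈ Finset.range n, ⟪t, b j ω⟫ ^ 2) / n) atTop
      (nhds (∫ ω, ⟪t, b 0 ω⟫ ^ 2 ∂P)) := by
    apply slln _ (hg1m.pow_const 2) (‖t‖ ^ 2)
    intro x
    rw [abs_pow]
    calc |⟪t, x⟫| ^ 2 ≤ (‖t‖ * ‖x‖) ^ 2 := pow_le_pow_left₀ (abs_nonneg _) (hb1 x) 2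
      _ = ‖t‖ ^ 2 * ‖x‖ ^ 2 := by ring
      _ ≤ ‖t‖ ^ 2 * (1 + ‖x‖ ^ 3) :=
          mul_le_mul_of_nonneg_left (hcube2 _ (norm_nonneg x)) (by positivity)
  have hC : ∀ᵐ ω ∂P, Tendsto (fun n : ℕ => (∑ j ∈ Finset.range n, |⟪t, b j ω⟫| ^ 3) / n) atTop
      (nhds (∫ ω, |⟪t, b 0 ω⟫| ^ 3 ∂P)) := by
    apply slln _ (hg1m.abs.pow_const 3) (‖t‖ ^ 3)
    intro x
    rw [abs_of_nonneg (by positivity : (0:ℝ) ≤ |⟪t, x⟫| ^ 3)]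
    calc |⟪t, x⟫| ^ 3 ≤ (‖t‖ * ‖x‖) ^ 3 := pow_le_pow_left₀ (abs_nonneg _) (hb1 x) 3
      _ = ‖t‖ ^ 3 * ‖x‖ ^ 3 := by ring
      _ ≤ ‖t‖ ^ 3 * (1 + ‖x‖ ^ 3) := by
          refine mul_le_mul_of_nonneg_left (by linarith [norm_nonneg x]) (by positivity)
  set m : ℝ := ∫ ω, ⟪t, b 0 ω⟫ ∂P with hmdef
  set q : ℝ := ∫ ω, ⟪t, b 0 ω⟫ ^ 2 ∂P with hqdef
  set r : ℝ := ∫ ω, |⟪t, b 0 ω⟫| ^ 3 ∂P with hrdef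
  -- component integrability
  have hcomp_le : ∀ (x : EuclideanSpace ℝ (Fin d)) k, |x k| ≤ ‖x‖ := by
    intro x k
    have h1 : (x k) ^ 2 ≤ ∑ i, (x i) ^ 2 :=
      Finset.single_le_sum (f := fun i => (x i) ^ 2) (fun i _ => sq_nonneg _) (Finset.mem_univ k)
    calc |x k| = Real.sqrt ((x k) ^ 2) := (Real.sqrt_sq_eq_abs _).symm
      _ ≤ Real.sqrt (∑ i, (x i) ^ 2) := Real.sqrt_le_sqrt h1
      _ = ‖x‖ := by
          rw [EuclideanSpace.norm_eq]
          congr 1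
          exact Finset.sum_congr rfl fun i _ => by rw [Real.norm_eq_abs, sq_abs]
  have hbk_meas : ∀ k, Measurable fun ω => b 0 ω k := fun k =>
    ((measurable_pi_apply k).comp (WithLp.measurable_ofLp 2 _)).comp (hbmeas 0)
  have hbk_int : ∀ k, Integrable (fun ω => b 0 ω k) P := by
    intro k
    apply Integrable.mono' hdom (hbk_meas k).aestronglyMeasurable
    exact ae_of_all _ fun ω => by
      rw [Real.norm_eq_abs]
      exact (hcomp_le (b 0 ω) k).trans (hcube1 _ (norm_nonneg _))
  have hI1 : Integrable (fun ω => ‖b 0 ω‖) P := by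
    apply Integrable.mono' hdom ((hbmeas 0).norm).aestronglyMeasurable
    exact ae_of_all _ fun ω => by
      rw [Real.norm_eq_abs, abs_of_nonneg (norm_nonneg _)]
      exact hcube1 _ (norm_nonneg _)
  have hI2 : Integrable (fun ω => ‖b 0 ω‖ ^ 2) P := by
    apply Integrable.mono' hdom (((hbmeas 0).norm).pow_const 2).aestronglyMeasurable
    exact ae_of_all _ fun ω => by
      rw [Real.norm_eq_abs, abs_of_nonneg (by positivity : (0:ℝ) ≤ ‖b 0 ω‖ ^ 2)]
      exact hcube2 _ (norm_nonneg _)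
  set mk : Fin d → ℝ := fun k => ∫ ω', b 0 ω' k ∂P with hmkdef
  have hprod_int : ∀ k l, Integrable
      (fun ω => (b 0 ω k - mk k) * (b 0 ω l - mk l)) P := by
    intro k l
    set A := |mk k| with hA
    set B := |mk l| with hB
    have hgint : Integrable (fun ω => ‖b 0 ω‖ ^ 2 + (A + B) * ‖b 0 ω‖ + A * B) P :=
      (hI2.add (hI1.const_mul (A + B))).add (integrable_const (A * B))
    apply Integrable.mono' hgint
    · exact (((hbk_meas k).sub measurable_const).mul
        ((hbk_meas l).sub measurable_const)).aestronglyMeasurable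
    · refine ae_of_all _ fun ω => ?_
      rw [Real.norm_eq_abs, abs_mul]
      have e1 : |b 0 ω k - mk k| ≤ ‖b 0 ω‖ + A := by
        refine (abs_sub _ _).trans ?_
        exact add_le_add_left (hcomp_le _ k) A
      have e2 : |b 0 ω l - mk l| ≤ ‖b 0 ω‖ + B := by
        refine (abs_sub _ _).trans ?_
        exact add_le_add_left (hcomp_le _ l) B
      calc |b 0 ω k - mk k| * |b 0 ω l - mk l| ≤ (‖b 0 ω‖ + A) * (‖b 0 ω‖ + B) :=
            mul_le_mul e1 e2 (abs_nonneg _) (by positivity)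
        _ = ‖b 0 ω‖ ^ 2 + (A + B) * ‖b 0 ω‖ + A * B := by ring
  have hX1 : Integrable (fun ω => ⟪t, b 0 ω⟫) P := by
    apply Integrable.mono' (hdom.const_mul ‖t‖) (hg1m.comp (hbmeas 0)).aestronglyMeasurable
    refine ae_of_all _ fun ω => ?_
    rw [Real.norm_eq_abs]
    exact (hb1 _).trans (mul_le_mul_of_nonneg_left (hcube1 _ (norm_nonneg _)) (norm_nonneg t))
  have hX2 : Integrable (fun ω => ⟪t, b 0 ω⟫ ^ 2) P := by
    apply Integrable.mono' (hdom.const_mul (‖t‖ ^ 2))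
      ((hg1m.pow_const 2).comp (hbmeas 0)).aestronglyMeasurable
    refine ae_of_all _ fun ω => ?_
    show ‖⟪t, b 0 ω⟫ ^ 2‖ ≤ ‖t‖ ^ 2 * (1 + ‖b 0 ω‖ ^ 3)
    rw [Real.norm_eq_abs, abs_pow]
    calc |⟪t, b 0 ω⟫| ^ 2 ≤ (‖t‖ * ‖b 0 ω‖) ^ 2 := pow_le_pow_left₀ (abs_nonneg _) (hb1 _) 2
      _ = ‖t‖ ^ 2 * ‖b 0 ω‖ ^ 2 := by ring
      _ ≤ ‖t‖ ^ 2 * (1 + ‖b 0 ω‖ ^ 3) :=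
          mul_le_mul_of_nonneg_left (hcube2 _ (norm_nonneg _)) (by positivity)
  -- inner product as a sum
  have hinner_sum : ∀ x : EuclideanSpace ℝ (Fin d), ⟪t, x⟫ = ∑ k, t k * x k := by
    intro x
    simp [PiLp.inner_apply, RCLike.inner_apply, conj_trivial]
    exact Finset.sum_congr rfl fun _ _ => mul_comm _ _
  have hm_sum : m = ∑ k, t k * mk k := by
    calc m = ∫ ω, ∑ k, t k * b 0 ω k ∂P :=
          integral_congr_ae (ae_of_all _ fun ω => hinner_sum _)
      _ = ∑ k, ∫ ω, t k * b 0 ω k ∂P :=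
          integral_finset_sum _ fun k _ => (hbk_int k).const_mul _
      _ = ∑ k, t k * mk k := Finset.sum_congr rfl fun k _ => integral_const_mul _ _
  -- variance identity
  have hvar : ∫ ω, (⟪t, b 0 ω⟫ - m) ^ 2 ∂P = q - m ^ 2 := by
    have e1 : (fun ω => (⟪t, b 0 ω⟫ - m) ^ 2)
        = fun ω => ⟪t, b 0 ω⟫ ^ 2 - 2 * m * ⟪t, b 0 ω⟫ + m ^ 2 := funext fun ω => by ring
    have hsub : Integrable (fun ω => ⟪t, b 0 ω⟫ ^ 2 - 2 * m * ⟪t, b 0 ω⟫) P :=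
      hX2.sub (hX1.const_mul (2 * m))
    rw [e1, integral_add hsub (integrable_const _),
      integral_sub hX2 (hX1.const_mul (2 * m)), integral_const_mul, integral_const]
    simp [hqdef, hmdef]
    ring
  have hptw : ∀ ω, (⟪t, b 0 ω⟫ - m) ^ 2
      = ∑ k, ∑ l, (t k * t l) * ((b 0 ω k - mk k) * (b 0 ω l - mk l)) := by
    intro ω
    rw [hinner_sum, hm_sum, ← Finset.sum_sub_distrib, sq, Finset.sum_mul_sum]
    refine Finset.sum_congr rfl fun k _ => Finset.sum_congr rfl fun l _ => by ring
  -- the covariance form equals the variance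
  have hqm : ∑ k, ∑ l, t k * D k l * t l = q - m ^ 2 := by
    have e1 : ∑ k, ∑ l, t k * D k l * t l
        = ∑ k, ∑ l, ∫ ω, (t k * t l) * ((b 0 ω k - mk k) * (b 0 ω l - mk l)) ∂P := by
      refine Finset.sum_congr rfl fun k _ => Finset.sum_congr rfl fun l _ => ?_
      rw [hD k l, integral_const_mul]
      ring
    rw [e1]
    have e2 : ∀ k : Fin d, ∑ l, ∫ ω, (t k * t l) * ((b 0 ω k - mk k) * (b 0 ω l - mk l)) ∂P
        = ∫ ω, ∑ l, (t k * t l) * ((b 0 ω k - mk k) * (b 0 ω l - mk l)) ∂P := fun k =>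
      (integral_finset_sum _ fun l _ => (hprod_int k l).const_mul _).symm
    rw [Finset.sum_congr rfl fun k _ => e2 k]
    rw [← integral_finset_sum _ fun k _ =>
      integrable_finset_sum _ fun l _ => (hprod_int k l).const_mul _]
    rw [integral_congr_ae (ae_of_all _ fun ω => (hptw ω).symm)]
    exact hvar
  -- combine
  filter_upwards [hA, hB, hC] with ω h1 h2 h3
  have hdet := det_lemma (fun j => ⟪t, b j ω⟫) M c m q r hc hM h1 h2 h3
  rw [hqm]
  have hfun : ∀ (n : ℕ) (j : ℕ),
      ⟪t, b j ω - (n : ℝ)⁻¹ • ∑ j' ∈ Finset.range n, b j' ω⟫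
        = ⟪t, b j ω⟫ - (n : ℝ)⁻¹ * ∑ j' ∈ Finset.range n, ⟪t, b j' ω⟫ := by
    intro n j
    rw [inner_sub_right, real_inner_smul_right, inner_sum]
  simp only [hfun]
  exact hdet
end

section
/- Let n ≥ 1. Let C_1, …, C_n be i.i.d. random variables uniformly distributed on {1, …, n}, define K_i = #{ m ≤ n : C_m = i } for i = 1, …, n (so (K_1, …, K_n) has the Multinomial(n; 1/n, …, 1/n) distribution), and let Y_1, …, Y_n be i.i.d. real random variables with E[Y_1²] < ∞, independent of (C_1, …, C_n). Then E[ ∑_{i=1}^n K_i Y_i ] = n E[Y_1] and Var( ∑_{i=1}^n K_i Y_i ) = (2n − 1) Var(Y_1) ≤ 2n E[Y_1²]. -/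
open MeasureTheory ProbabilityTheory

private lemma sum_if_eq_const {n : ℕ} (i : Fin n) (a b : ℝ) :
    ∑ j : Fin n, (if i = j then a else b) = a + ((n : ℝ) - 1) * b := by
  have h : ∀ j : Fin n, (if i = j then a else b) = b + (if i = j then a - b else 0) :=
    fun j => by split <;> ring
  rw [Finset.sum_congr rfl fun j _ => h j, Finset.sum_add_distrib, Finset.sum_const,
    Finset.sum_ite_eq, if_pos (Finset.mem_univ i), Finset.card_univ, Fintype.card_fin,
    nsmul_eq_mul]
  ring


private lemma quad_sum_eval (n : ℕ) (hn : 1 ≤ n) (s e : ℝ) :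
    ∑ p : Fin n × Fin n, ∑ q : Fin n × Fin n,
      (if p.2 = q.2 then (if p.1 = q.1 then (n:ℝ)⁻¹ else 0) else (n:ℝ)⁻¹ * (n:ℝ)⁻¹)
        * (if p.1 = q.1 then s else e ^ 2)
    = (n:ℝ) * s + ((n:ℝ) - 1) * s + ((n:ℝ) - 1) ^ 2 * e ^ 2 := by
  have hn0 : (n:ℝ) ≠ 0 := by
    have : (1:ℝ) ≤ n := by exact_mod_cast hn
    linarith
  have hinner : ∀ p : Fin n × Fin n,
      ∑ q : Fin n × Fin n,
        (if p.2 = q.2 then (if p.1 = q.1 then (n:ℝ)⁻¹ else 0) else (n:ℝ)⁻¹ * (n:ℝ)⁻¹)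
          * (if p.1 = q.1 then s else e ^ 2)
      = ((n:ℝ)⁻¹ * s + ((n:ℝ) - 1) * ((n:ℝ)⁻¹ * (n:ℝ)⁻¹ * s))
          + ((n:ℝ) - 1) * (((n:ℝ) - 1) * ((n:ℝ)⁻¹ * (n:ℝ)⁻¹ * e ^ 2)) := by
    intro p
    have hstep : ∀ j : Fin n,
        (∑ m' : Fin n,
          (if p.2 = m' then (if p.1 = j then (n:ℝ)⁻¹ else 0) else (n:ℝ)⁻¹ * (n:ℝ)⁻¹)
            * (if p.1 = j then s else e ^ 2))
        = if p.1 = j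
            then (n:ℝ)⁻¹ * s + ((n:ℝ) - 1) * ((n:ℝ)⁻¹ * (n:ℝ)⁻¹ * s)
            else ((n:ℝ) - 1) * ((n:ℝ)⁻¹ * (n:ℝ)⁻¹ * e ^ 2) := by
      intro j
      have h1 : ∀ m' : Fin n,
          (if p.2 = m' then (if p.1 = j then (n:ℝ)⁻¹ else 0) else (n:ℝ)⁻¹ * (n:ℝ)⁻¹)
            * (if p.1 = j then s else e ^ 2)
          = if p.2 = m'
              then (if p.1 = j then (n:ℝ)⁻¹ else 0) * (if p.1 = j then s else e ^ 2)
              else (n:ℝ)⁻¹ * (n:ℝ)⁻¹ * (if p.1 = j then s else e ^ 2) := by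
        intro m'; split <;> rfl
      rw [Finset.sum_congr rfl fun m' _ => h1 m', sum_if_eq_const]
      by_cases hij : p.1 = j <;> simp [hij]
    calc ∑ q : Fin n × Fin n,
          (if p.2 = q.2 then (if p.1 = q.1 then (n:ℝ)⁻¹ else 0) else (n:ℝ)⁻¹ * (n:ℝ)⁻¹)
            * (if p.1 = q.1 then s else e ^ 2)
        = ∑ j : Fin n, ∑ m' : Fin n,
            (if p.2 = m' then (if p.1 = j then (n:ℝ)⁻¹ else 0) else (n:ℝ)⁻¹ * (n:ℝ)⁻¹)
              * (if p.1 = j then s else e ^ 2) := Fintype.sum_prod_type _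
      _ = ∑ j : Fin n, (if p.1 = j
            then (n:ℝ)⁻¹ * s + ((n:ℝ) - 1) * ((n:ℝ)⁻¹ * (n:ℝ)⁻¹ * s)
            else ((n:ℝ) - 1) * ((n:ℝ)⁻¹ * (n:ℝ)⁻¹ * e ^ 2)) :=
          Finset.sum_congr rfl fun j _ => hstep j
      _ = _ := sum_if_eq_const _ _ _
  rw [Finset.sum_congr rfl fun p _ => hinner p, Finset.sum_const, Finset.card_univ]
  simp only [Fintype.card_prod, Fintype.card_fin, nsmul_eq_mul]
  push_cast
  field_simp

/-- Let `(K 1, …, K n)` be `Multinomial(n; 1/n, …, 1/n)` counts obtained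
from i.i.d. uniform draws `C 1, …, C n` on `{1, …, n}`, and let `Y 1, …, Y n` be i.i.d. real
random variables with `E[Y₁²] < ∞`, independent of the `C`'s. Then
`E[∑ i, K i * Y i] = n E[Y₁]` and
`Var(∑ i, K i * Y i) = (2n - 1) Var(Y₁) ≤ 2n E[Y₁²]`. -/
theorem multinomial_weighted_sum_moments (n : ℕ) (hn : 1 ≤ n)
    {Ω : Type*} [MeasurableSpace Ω] (P : Measure Ω) [IsProbabilityMeasure P]
    (C : Fin n → Ω → Fin n) (hCmeas : ∀ m, Measurable (C m))
    (hCindep : iIndepFun C P)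
    (hCunif : ∀ m (j : Fin n), P {ω | C m ω = j} = (n : ENNReal)⁻¹)
    (Y : Fin n → Ω → ℝ) (hYmeas : ∀ i, Measurable (Y i))
    (hYindep : iIndepFun Y P)
    (hYident : ∀ i, Measure.map (Y i) P = Measure.map (Y ⟨0, hn⟩) P)
    (hYsq : Integrable (fun ω => (Y ⟨0, hn⟩ ω) ^ 2) P)
    (hCY : IndepFun (fun ω m => C m ω) (fun ω i => Y i ω) P) :
    (∫ ω, ∑ i, ((Finset.univ.filter fun m => C m ω = i).card : ℝ) * Y i ω ∂P)
        = n * ∫ ω, Y ⟨0, hn⟩ ω ∂P ∧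
      variance (fun ω => ∑ i, ((Finset.univ.filter fun m => C m ω = i).card : ℝ) * Y i ω) P
        = (2 * (n : ℝ) - 1) * variance (Y ⟨0, hn⟩) P ∧
      (2 * (n : ℝ) - 1) * variance (Y ⟨0, hn⟩) P ≤ 2 * n * ∫ ω, (Y ⟨0, hn⟩ ω) ^ 2 ∂P := by
  classical
  have hnR : (1:ℝ) ≤ (n:ℝ) := by exact_mod_cast hn
  have hn0 : (n:ℝ) ≠ 0 := by positivity
  set Y0 : Ω → ℝ := Y ⟨0, hn⟩ with hY0
  set Ey : ℝ := ∫ ω, Y0 ω ∂P with hEydef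
  set s : ℝ := ∫ ω, (Y0 ω) ^ 2 ∂P with hsdef
  -- squares are integrable for every i
  have hx2m : ∀ (μ : Measure ℝ), AEStronglyMeasurable (fun x : ℝ => x ^ 2) μ :=
    fun μ => (continuous_pow 2).aestronglyMeasurable
  have hsq_map : Integrable (fun x : ℝ => x ^ 2) (Measure.map Y0 P) :=
    (integrable_map_measure (hx2m _) (hYmeas _).aemeasurable).2 hYsq
  have hYsqi : ∀ i, Integrable (fun ω => (Y i ω) ^ 2) P := by
    intro i
    have h := hsq_map
    rw [← hYident i] at h
    exact (integrable_map_measure (hx2m _) (hYmeas i).aemeasurable).1 h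
  have hL2 : ∀ i, MemLp (Y i) 2 P := fun i =>
    (memLp_two_iff_integrable_sq (hYmeas i).aestronglyMeasurable).2 (hYsqi i)
  have hYint : ∀ i, Integrable (Y i) P := fun i => (hL2 i).integrable one_le_two
  have hEyi : ∀ i, ∫ ω, Y i ω ∂P = Ey := by
    intro i
    calc ∫ ω, Y i ω ∂P = ∫ x, x ∂(Measure.map (Y i) P) :=
          (integral_map (hYmeas i).aemeasurable measurable_id.aestronglyMeasurable).symm
      _ = ∫ x, x ∂(Measure.map Y0 P) := by rw [hYident i]
      _ = ∫ ω, Y0 ω ∂P :=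
          integral_map (hYmeas _).aemeasurable measurable_id.aestronglyMeasurable
  have hEsi : ∀ i, ∫ ω, (Y i ω) ^ 2 ∂P = s := by
    intro i
    calc ∫ ω, (Y i ω) ^ 2 ∂P = ∫ x, x ^ 2 ∂(Measure.map (Y i) P) :=
          (integral_map (hYmeas i).aemeasurable
            (hx2m _)).symm
      _ = ∫ x, x ^ 2 ∂(Measure.map Y0 P) := by rw [hYident i]
      _ = ∫ ω, (Y0 ω) ^ 2 ∂P :=
          integral_map (hYmeas _).aemeasurable (hx2m _)
  have hprod : ∀ i j, Integrable (fun ω => Y i ω * Y j ω) P := by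
    intro i j
    have h : MemLp ((Y i) • (Y j)) 1 P :=
      (hL2 j).smul (hL2 i) (hpqr := ⟨by
        rw [inv_one, ENNReal.inv_two_add_inv_two]⟩)
    have := memLp_one_iff_integrable.1 h
    exact this
  have hEprod : ∀ i j, ∫ ω, Y i ω * Y j ω ∂P = if i = j then s else Ey ^ 2 := by
    intro i j
    by_cases hij : i = j
    · subst hij
      rw [if_pos rfl, ← hEsi i]
      congr 1; funext ω; ring
    · rw [if_neg hij]
      have h := (hYindep.indepFun hij).integral_fun_mul_eq_mul_integral (hYint i).aestronglyMeasurable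
        (hYint j).aestronglyMeasurable
      calc ∫ ω, Y i ω * Y j ω ∂P = (∫ ω, Y i ω ∂P) * ∫ ω, Y j ω ∂P := h
        _ = Ey ^ 2 := by rw [hEyi i, hEyi j]; ring
  -- measurable events for C
  have hAmeas : ∀ (m : Fin n) (i : Fin n), MeasurableSet {ω | C m ω = i} :=
    fun m i => (hCmeas m) (measurableSet_singleton i)
  have hBmeas : ∀ (m m' i j : Fin n), MeasurableSet {ω | C m ω = i ∧ C m' ω = j} :=
    fun m m' i j => (hAmeas m i).inter (hAmeas m' j)
  -- joint law of (C m, C m')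
  have hPjoint : ∀ (m m' i j : Fin n),
      (P {ω | C m ω = i ∧ C m' ω = j}).toReal
        = if m = m' then (if i = j then (n:ℝ)⁻¹ else 0) else (n:ℝ)⁻¹ * (n:ℝ)⁻¹ := by
    intro m m' i j
    by_cases hmm : m = m'
    · subst hmm
      rw [if_pos rfl]
      by_cases hij : i = j
      · subst hij
        rw [if_pos rfl]
        have hst : {ω | C m ω = i ∧ C m ω = i} = {ω | C m ω = i} := by ext ω; simp
        rw [hst, hCunif m i, ENNReal.toReal_inv, ENNReal.toReal_natCast]
      · rw [if_neg hij]
        have hst : {ω | C m ω = i ∧ C m ω = j} = ∅ := by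
          ext ω
          simp only [Set.mem_setOf_eq, Set.mem_empty_iff_false, iff_false, not_and]
          intro h1 h2
          exact hij (h1 ▸ h2 ▸ rfl)
        rw [hst]; simp
    · rw [if_neg hmm]
      have hind := (hCindep.indepFun hmm).measure_inter_preimage_eq_mul
        ({i} : Set (Fin n)) ({j} : Set (Fin n))
        (measurableSet_singleton i) (measurableSet_singleton j)
      have hset : {ω | C m ω = i ∧ C m' ω = j} = C m ⁻¹' {i} ∩ C m' ⁻¹' {j} := by
        ext ω; simp [Set.mem_inter_iff]
      have h1 : C m ⁻¹' ({i} : Set (Fin n)) = {ω | C m ω = i} := by ext ω; simp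
      have h2 : C m' ⁻¹' ({j} : Set (Fin n)) = {ω | C m' ω = j} := by ext ω; simp
      rw [hset, hind, h1, h2, hCunif, hCunif, ENNReal.toReal_mul, ENNReal.toReal_inv,
        ENNReal.toReal_natCast]
  -- key integral: indicator times product, via independence of C's and Y's
  have hkey : ∀ (m m' i j : Fin n),
      ∫ ω, (if C m ω = i ∧ C m' ω = j then (1:ℝ) else 0) * (Y i ω * Y j ω) ∂P
        = (P {ω | C m ω = i ∧ C m' ω = j}).toReal * ∫ ω, Y i ω * Y j ω ∂P := by
    intro m m' i j
    have hsetv : MeasurableSet {v : Fin n → Fin n | v m = i ∧ v m' = j} := by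
      have hv : {v : Fin n → Fin n | v m = i ∧ v m' = j}
          = (fun v : Fin n → Fin n => v m) ⁻¹' {i}
            ∩ (fun v : Fin n → Fin n => v m') ⁻¹' {j} := by
        ext v; simp
      rw [hv]
      exact ((measurable_pi_apply m) (measurableSet_singleton i)).inter
        ((measurable_pi_apply m') (measurableSet_singleton j))
    have hφ : Measurable (fun v : Fin n → Fin n => if v m = i ∧ v m' = j then (1:ℝ) else 0) :=
      Measurable.ite hsetv measurable_const measurable_const
    have hψ : Measurable (fun w : Fin n → ℝ => w i * w j) :=
      (measurable_pi_apply i).mul (measurable_pi_apply j)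
    have hindep : IndepFun (fun ω => if C m ω = i ∧ C m' ω = j then (1:ℝ) else 0)
        (fun ω => Y i ω * Y j ω) P := hCY.comp hφ hψ
    have hind_eq : (fun ω => if C m ω = i ∧ C m' ω = j then (1:ℝ) else 0)
        = Set.indicator {ω | C m ω = i ∧ C m' ω = j} (1 : Ω → ℝ) := by
      funext ω; simp [Set.indicator_apply]
    have hχint : Integrable (fun ω => if C m ω = i ∧ C m' ω = j then (1:ℝ) else 0) P := by
      rw [hind_eq]
      exact (integrable_const (1:ℝ)).indicator (hBmeas m m' i j)
    have h := hindep.integral_fun_mul_eq_mul_integral hχint.aestronglyMeasurable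
      (hprod i j).aestronglyMeasurable
    have hχ : ∫ ω, (if C m ω = i ∧ C m' ω = j then (1:ℝ) else 0) ∂P
        = (P {ω | C m ω = i ∧ C m' ω = j}).toReal := by
      rw [hind_eq]
      exact integral_indicator_one (hBmeas m m' i j)
    calc ∫ ω, (if C m ω = i ∧ C m' ω = j then (1:ℝ) else 0) * (Y i ω * Y j ω) ∂P
        = (∫ ω, (if C m ω = i ∧ C m' ω = j then (1:ℝ) else 0) ∂P)
            * ∫ ω, Y i ω * Y j ω ∂P := h
      _ = (P {ω | C m ω = i ∧ C m' ω = j}).toReal * ∫ ω, Y i ω * Y j ω ∂P := by rw [hχ]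
  -- unary key integral for the mean
  have hkey1 : ∀ (m i : Fin n),
      ∫ ω, (if C m ω = i then (1:ℝ) else 0) * Y i ω ∂P = (n:ℝ)⁻¹ * Ey := by
    intro m i
    have hsetv : MeasurableSet {v : Fin n → Fin n | v m = i} := by
      have hv : {v : Fin n → Fin n | v m = i}
          = (fun v : Fin n → Fin n => v m) ⁻¹' {i} := by ext v; simp
      rw [hv]
      exact (measurable_pi_apply m) (measurableSet_singleton i)
    have hφ : Measurable (fun v : Fin n → Fin n => if v m = i then (1:ℝ) else 0) :=
      Measurable.ite hsetv measurable_const measurable_const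
    have hψ : Measurable (fun w : Fin n → ℝ => w i) := measurable_pi_apply i
    have hindep : IndepFun (fun ω => if C m ω = i then (1:ℝ) else 0) (Y i) P :=
      hCY.comp hφ hψ
    have hind_eq : (fun ω => if C m ω = i then (1:ℝ) else 0)
        = Set.indicator {ω | C m ω = i} (1 : Ω → ℝ) := by
      funext ω; simp [Set.indicator_apply]
    have hχint : Integrable (fun ω => if C m ω = i then (1:ℝ) else 0) P := by
      rw [hind_eq]
      exact (integrable_const (1:ℝ)).indicator (hAmeas m i)
    have h := hindep.integral_fun_mul_eq_mul_integral hχint.aestronglyMeasurable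
      (hYint i).aestronglyMeasurable
    have hχ : ∫ ω, (if C m ω = i then (1:ℝ) else 0) ∂P = (n:ℝ)⁻¹ := by
      rw [hind_eq, integral_indicator_one (hAmeas m i), measureReal_def, hCunif m i,
        ENNReal.toReal_inv, ENNReal.toReal_natCast]
    calc ∫ ω, (if C m ω = i then (1:ℝ) else 0) * Y i ω ∂P
        = (∫ ω, (if C m ω = i then (1:ℝ) else 0) ∂P) * ∫ ω, Y i ω ∂P := h
      _ = (n:ℝ)⁻¹ * Ey := by rw [hχ, hEyi i]
  -- the summand functions
  set g : Fin n × Fin n → Ω → ℝ :=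
    fun p ω => (if C p.2 ω = p.1 then (1:ℝ) else 0) * Y p.1 ω with hgdef
  have hSrw : ∀ ω, (∑ i, ((Finset.univ.filter fun m => C m ω = i).card : ℝ) * Y i ω)
      = ∑ p : Fin n × Fin n, g p ω := by
    intro ω
    rw [Fintype.sum_prod_type]
    refine Finset.sum_congr rfl fun i _ => ?_
    simp only [hgdef]
    rw [← Finset.sum_mul]
    congr 1
    rw [Finset.card_filter]
    push_cast
    rfl
  have hgmeas : ∀ p, Measurable (g p) := by
    intro p
    exact (Measurable.ite (hAmeas p.2 p.1) measurable_const measurable_const).mul (hYmeas p.1)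
  have hgL2 : ∀ p, MemLp (g p) 2 P := by
    intro p
    refine (hL2 p.1).of_le (hgmeas p).aestronglyMeasurable ?_
    filter_upwards with ω
    simp only [hgdef, Real.norm_eq_abs, abs_mul]
    by_cases h : C p.2 ω = p.1 <;> simp [h, abs_nonneg]
  have hgint : ∀ p, Integrable (g p) P := fun p => (hgL2 p).integrable one_le_two
  have hgg_int : ∀ p q : Fin n × Fin n, Integrable (fun ω => g p ω * g q ω) P := by
    intro p q
    refine (hprod p.1 q.1).mono ((hgmeas p).mul (hgmeas q)).aestronglyMeasurable ?_
    filter_upwards with ω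
    simp only [hgdef, Real.norm_eq_abs]
    by_cases h1 : C p.2 ω = p.1 <;> by_cases h2 : C q.2 ω = q.1 <;>
      simp [h1, h2, abs_nonneg, abs_mul] <;> positivity
  have hggrw : ∀ p q : Fin n × Fin n, (fun ω => g p ω * g q ω)
      = fun ω => (if C p.2 ω = p.1 ∧ C q.2 ω = q.1 then (1:ℝ) else 0)
          * (Y p.1 ω * Y q.1 ω) := by
    intro p q; funext ω
    simp only [hgdef]
    by_cases h1 : C p.2 ω = p.1 <;> by_cases h2 : C q.2 ω = q.1 <;>
      simp [h1, h2]
  have hInt2 : ∀ p q : Fin n × Fin n, ∫ ω, g p ω * g q ω ∂P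
      = (if p.2 = q.2 then (if p.1 = q.1 then (n:ℝ)⁻¹ else 0) else (n:ℝ)⁻¹ * (n:ℝ)⁻¹)
          * (if p.1 = q.1 then s else Ey ^ 2) := by
    intro p q
    rw [show (∫ ω, g p ω * g q ω ∂P)
        = ∫ ω, (if C p.2 ω = p.1 ∧ C q.2 ω = q.1 then (1:ℝ) else 0)
            * (Y p.1 ω * Y q.1 ω) ∂P from congrArg (integral P) (hggrw p q)]
    rw [hkey p.2 q.2 p.1 q.1, hPjoint p.2 q.2 p.1 q.1, hEprod p.1 q.1]
  -- the mean
  have hmean : ∫ ω, ∑ p : Fin n × Fin n, g p ω ∂P = (n:ℝ) * Ey := by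
    rw [integral_finset_sum _ (fun p _ => hgint p)]
    rw [Finset.sum_congr rfl fun p _ => hkey1 p.2 p.1]
    rw [Finset.sum_const, Finset.card_univ]
    simp only [Fintype.card_prod, Fintype.card_fin, nsmul_eq_mul]
    push_cast
    field_simp
  -- the second moment
  have hM2 : ∫ ω, (∑ p : Fin n × Fin n, g p ω) ^ 2 ∂P
      = (n:ℝ) * s + ((n:ℝ) - 1) * s + ((n:ℝ) - 1) ^ 2 * Ey ^ 2 := by
    have hsq : ∀ ω, (∑ p : Fin n × Fin n, g p ω) ^ 2
        = ∑ p : Fin n × Fin n, ∑ q : Fin n × Fin n, g p ω * g q ω := by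
      intro ω; rw [sq, Finset.sum_mul_sum]
    rw [show (∫ ω, (∑ p : Fin n × Fin n, g p ω) ^ 2 ∂P)
        = ∫ ω, ∑ p : Fin n × Fin n, ∑ q : Fin n × Fin n, g p ω * g q ω ∂P from by
      congr 1; funext ω; exact hsq ω]
    rw [integral_finset_sum _ (fun p _ =>
      integrable_finset_sum _ (fun q _ => hgg_int p q))]
    rw [Finset.sum_congr rfl fun p _ => integral_finset_sum _ (fun q _ => hgg_int p q)]
    rw [Finset.sum_congr rfl fun p _ =>
      Finset.sum_congr rfl fun q _ => hInt2 p q]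
    -- evaluate the quadruple sum
    exact quad_sum_eval n hn s Ey
  -- Memℒp of the sum
  have hSL2 : MemLp (fun ω => ∑ p : Fin n × Fin n, g p ω) 2 P :=
    memLp_finset_sum _ (fun p _ => hgL2 p)
  have hvarY0 : variance Y0 P = s - Ey ^ 2 := by
    rw [variance_eq_sub (hL2 ⟨0, hn⟩)]
    rfl
  have hvarS : variance (fun ω => ∑ p : Fin n × Fin n, g p ω) P
      = (2 * (n:ℝ) - 1) * (s - Ey ^ 2) := by
    rw [variance_eq_sub hSL2]
    have h1 : P[(fun ω => ∑ p : Fin n × Fin n, g p ω) ^ 2]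
        = ∫ ω, (∑ p : Fin n × Fin n, g p ω) ^ 2 ∂P := rfl
    have h2 : P[fun ω => ∑ p : Fin n × Fin n, g p ω]
        = ∫ ω, ∑ p : Fin n × Fin n, g p ω ∂P := rfl
    rw [h1, h2, hM2, hmean]
    ring
  have hs_nonneg : 0 ≤ s := by
    rw [hsdef]; exact integral_nonneg fun ω => sq_nonneg _
  refine ⟨?_, ?_, ?_⟩
  · rw [show (∫ ω, ∑ i, ((Finset.univ.filter fun m => C m ω = i).card : ℝ) * Y i ω ∂P)
        = ∫ ω, ∑ p : Fin n × Fin n, g p ω ∂P from by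
      congr 1; funext ω; exact hSrw ω]
    exact hmean
  · rw [show (fun ω => ∑ i, ((Finset.univ.filter fun m => C m ω = i).card : ℝ) * Y i ω)
        = fun ω => ∑ p : Fin n × Fin n, g p ω from funext hSrw]
    rw [hvarS, hvarY0]
  · rw [hvarY0]
    nlinarith [sq_nonneg Ey, hs_nonneg, hnR]
end
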